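/- Suppose μ_high < 1 and the channel widths are uniformly bounded (sup_k m_k < ∞). Then for every v ∈ ℝ^N with ⟨v, h_1⟩ = 0, the quantity Σ_{j=1}^{m_K} |⟨f_j^(K), v⟩| tends to 0 as K → ∞. -/
import Mathlib


open Matrix

noncomputable section

/-- Euclidean (2-)norm on `ℝ^N`. -/
def rnorm2 {N : ℕ} (f : Fin N → ℝ) : ℝ := Real.sqrt (∑ i, f i ^ 2)

/-- Frobenius norm of a real matrix. -/
def frob {N m : ℕ} (M : Matrix (Fin N) (Fin m) ℝ) : ℝ := Real.sqrt (∑ i, ∑ j, M i j ^ 2)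

/-- Entrywise ReLU of a vector. -/
def reluV {N : ℕ} (f : Fin N → ℝ) : Fin N → ℝ := fun i => max (f i) 0

/-- Entrywise ReLU of a matrix. -/
def reluM {N m : ℕ} (M : Matrix (Fin N) (Fin m) ℝ) : Matrix (Fin N) (Fin m) ℝ :=
  Matrix.of fun i j => max (M i j) 0

/-- `P f = f - ⟨f, h⟩ h`. -/
def Pv {N : ℕ} (h : Fin N → ℝ) (f : Fin N → ℝ) : Fin N → ℝ := f - (f ⬝ᵥ h) • h

/-- `P` applied columnwise to a matrix. -/
def Pcol {N m : ℕ} (h : Fin N → ℝ) (M : Matrix (Fin N) (Fin m) ℝ) :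
    Matrix (Fin N) (Fin m) ℝ :=
  Matrix.of fun i j => M i j - ((fun x => M x j) ⬝ᵥ h) * h i

/-- `μ_high = max{|μ_2|, …, |μ_N|}` (indices `i : Fin N` with `i ≥ 1`). -/
def muHigh {N : ℕ} (μ : Fin N → ℝ) : ℝ := ⨆ i : {i : Fin N // 0 < (i : ℕ)}, |μ i.1|

lemma relu_pt (s a u : ℝ) (hu : 0 ≤ u) : (max s 0 - max a 0 * u) ^ 2 ≤ (s - a * u) ^ 2 := by
  rcases le_total a 0 with ha | ha
  · rw [max_eq_right ha]
    rcases le_total s 0 with hs | hs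
    · rw [max_eq_right hs]; nlinarith
    · rw [max_eq_left hs]; nlinarith [mul_nonneg hs (mul_nonneg hu (neg_nonneg.2 ha))]
  · rw [max_eq_left ha]
    rcases le_total s 0 with hs | hs
    · rw [max_eq_right hs]; nlinarith [mul_nonneg (neg_nonneg.2 hs) (mul_nonneg ha hu)]
    · rw [max_eq_left hs]

lemma pyth {N : ℕ} (u y : Fin N → ℝ) (hu : ∑ x, u x ^ 2 = 1) (c : ℝ) :
    ∑ x, (y x - (∑ i, y i * u i) * u x) ^ 2 ≤ ∑ x, (y x - c * u x) ^ 2 := by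
  set b := ∑ i, y i * u i with hb
  rw [← sub_nonneg, ← Finset.sum_sub_distrib]
  have key : ∀ x : Fin N, (y x - c * u x) ^ 2 - (y x - b * u x) ^ 2
      = (b - c) * (2 * (y x * u x)) + (c ^ 2 - b ^ 2) * u x ^ 2 := fun x => by ring
  simp_rw [key]
  rw [Finset.sum_add_distrib, ← Finset.mul_sum, ← Finset.mul_sum, ← Finset.mul_sum, hu, ← hb]
  nlinarith [sq_nonneg (b - c)]

set_option maxHeartbeats 1000000 in
/-- if `μ_high < 1` and the channel widths are uniformly bounded, then
for every `v ∈ ℝ^N` with `⟨v, h_1⟩ = 0`, `Σ_{j=1}^{m_K} |⟨f_j^(K), v⟩| → 0` as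
`K → ∞`. -/
theorem stmt14 (N : ℕ) (hN : 2 ≤ N)
    (H : Matrix (Fin N) (Fin N) ℝ) (hH : H.IsSymm)
    (h : Fin N → Fin N → ℝ)
    (hortho : ∀ i j, h i ⬝ᵥ h j = if i = j then 1 else 0)
    (μ : Fin N → ℝ) (heig : ∀ i, H *ᵥ h i = μ i • h i)
    (h1pos : ∀ x, 0 ≤ h ⟨0, by omega⟩ x)
    (m : ℕ → ℕ) (W : ∀ k, Matrix (Fin (m k)) (Fin (m (k + 1))) ℝ)
    (hW : ∀ k, frob (W k) ≤ 1)
    (F : ∀ k, Matrix (Fin N) (Fin (m k)) ℝ)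
    (hF : ∀ k, F (k + 1) = reluM (H * F k * W k))
    (hmu : muHigh μ < 1) (hbd : ∃ B, ∀ k, m k ≤ B)
    (v : Fin N → ℝ) (hv : v ⬝ᵥ h ⟨0, by omega⟩ = 0) :
    Filter.Tendsto (fun K => ∑ j : Fin (m K), |(fun x => F K x j) ⬝ᵥ v|)
      Filter.atTop (nhds 0) := by
  have h0N : 0 < N := by omega
  set i0 : Fin N := ⟨0, h0N⟩ with hi0
  set e : Fin N → ℝ := h i0 with he
  set q : ℝ := muHigh μ with hq
  -- basic facts about q
  have hbdd : BddAbove (Set.range fun i : {i : Fin N // 0 < (i : ℕ)} => |μ i.1|) :=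
    Set.Finite.bddAbove (Set.finite_range _)
  have hqle : ∀ i : Fin N, i ≠ i0 → |μ i| ≤ q := by
    intro i hi
    have hpos : 0 < (i : ℕ) := Nat.pos_of_ne_zero (fun hz => hi (Fin.ext hz))
    exact le_ciSup hbdd ⟨i, hpos⟩
  have hq0 : 0 ≤ q := by
    have hne : (⟨1, by omega⟩ : Fin N) ≠ i0 := by
      intro hz
      have := congrArg Fin.val hz
      simp [hi0] at this
    exact le_trans (abs_nonneg _) (hqle _ hne)
  -- expansion in the eigenbasis
  have hexp : ∀ y : Fin N → ℝ, ∀ x, ∑ i, (y ⬝ᵥ h i) * h i x = y x := by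
    set Q : Matrix (Fin N) (Fin N) ℝ := Matrix.of (fun i x => h i x) with hQ
    have hQQt : Q * Qᵀ = 1 := by
      ext i j
      simp only [Matrix.mul_apply, Matrix.transpose_apply, Matrix.one_apply, hQ, Matrix.of_apply]
      simpa [dotProduct] using hortho i j
    have hQtQ : Qᵀ * Q = 1 := mul_eq_one_comm.mp hQQt
    intro y x
    have hy := congrArg (fun M => (M *ᵥ y) x) hQtQ
    simp only [Matrix.one_mulVec] at hy
    rw [← hy]
    simp only [Matrix.mulVec, Matrix.mul_apply, dotProduct, Matrix.transpose_apply, hQ,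
      Matrix.of_apply, Finset.sum_mul]
    rw [Finset.sum_comm]
    congr 1; ext i
    exact Finset.sum_congr rfl fun z _ => by ring
  have he2 : ∑ x, e x ^ 2 = 1 := by
    have := hortho i0 i0
    simp only [if_pos rfl, dotProduct] at this
    simpa [pow_two] using this
  have hPapp : ∀ (y : Fin N → ℝ) (x : Fin N), Pv e y x = y x - (y ⬝ᵥ e) * e x := by
    intro y x; simp [Pv, smul_eq_mul]
  have hPsq : ∀ y : Fin N → ℝ, ∑ x, (Pv e y x) ^ 2 = (∑ x, y x ^ 2) - (y ⬝ᵥ e) ^ 2 := by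
    intro y
    simp_rw [hPapp]
    have key : ∀ x, (y x - (y ⬝ᵥ e) * e x) ^ 2
        = y x ^ 2 - (y ⬝ᵥ e) * (2 * (y x * e x)) + (y ⬝ᵥ e) ^ 2 * e x ^ 2 := fun x => by ring
    simp_rw [key]
    rw [Finset.sum_add_distrib, Finset.sum_sub_distrib, ← Finset.mul_sum, ← Finset.mul_sum,
      ← Finset.mul_sum, he2]
    have hdp : ∑ x, y x * e x = y ⬝ᵥ e := rfl
    rw [hdp]; ring
  have hpar : ∀ y : Fin N → ℝ, ∑ x, y x ^ 2 = ∑ i, (y ⬝ᵥ h i) ^ 2 := by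
    intro y
    have : ∑ x, y x ^ 2 = ∑ x, y x * (∑ i, (y ⬝ᵥ h i) * h i x) := by
      refine Finset.sum_congr rfl fun x _ => ?_
      rw [hexp y x]; ring
    rw [this]
    simp_rw [Finset.mul_sum]
    rw [Finset.sum_comm]
    refine Finset.sum_congr rfl fun i _ => ?_
    have : ∑ x, y x * ((y ⬝ᵥ h i) * h i x) = (y ⬝ᵥ h i) * ∑ x, y x * h i x := by
      rw [Finset.mul_sum]; exact Finset.sum_congr rfl fun x _ => by ring
    rw [this]
    have hdp : ∑ x, y x * h i x = y ⬝ᵥ h i := rfl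
    rw [hdp]; ring
  have hPer : ∀ y : Fin N → ℝ,
      ∑ x, (Pv e y x) ^ 2 = ∑ i ∈ Finset.univ.erase i0, (y ⬝ᵥ h i) ^ 2 := by
    intro y
    rw [hPsq, hpar, ← Finset.sum_erase_add Finset.univ _ (Finset.mem_univ i0)]
    rw [← he]; ring
  -- H contracts the projected norm
  have colH : ∀ w : Fin N → ℝ,
      ∑ x, (Pv e (H *ᵥ w) x) ^ 2 ≤ q ^ 2 * ∑ x, (Pv e w x) ^ 2 := by
    intro w
    rw [hPer, hPer, Finset.mul_sum]
    refine Finset.sum_le_sum fun i hi => ?_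
    have hine : i ≠ i0 := (Finset.mem_erase.mp hi).1
    have hdot : (H *ᵥ w) ⬝ᵥ h i = μ i * (w ⬝ᵥ h i) := by
      rw [dotProduct_comm, Matrix.dotProduct_mulVec, ← hH.eq, Matrix.vecMul_transpose,
        heig, smul_dotProduct, dotProduct_comm]
      rfl
    rw [hdot]
    have hqi := hqle i hine
    nlinarith [sq_nonneg (w ⬝ᵥ h i), sq_abs (μ i), mul_self_le_mul_self (abs_nonneg (μ i)) hqi]
  -- ReLU contracts the projected norm
  have colRelu : ∀ g : Fin N → ℝ,
      ∑ x, (Pv e (reluV g) x) ^ 2 ≤ ∑ x, (Pv e g x) ^ 2 := by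
    intro g
    simp_rw [hPapp]
    have hdp : reluV g ⬝ᵥ e = ∑ i, reluV g i * e i := rfl
    calc ∑ x, (reluV g x - (reluV g ⬝ᵥ e) * e x) ^ 2
        ≤ ∑ x, (reluV g x - max (g ⬝ᵥ e) 0 * e x) ^ 2 := by
          rw [hdp]; exact pyth e (reluV g) he2 (max (g ⬝ᵥ e) 0)
      _ ≤ ∑ x, (g x - (g ⬝ᵥ e) * e x) ^ 2 :=
          Finset.sum_le_sum fun x _ => relu_pt (g x) (g ⬝ᵥ e) (e x) (h1pos x)
  -- multiplication by W on the right: the projected column of X*W'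
  have colWkey : ∀ {n p : ℕ} (X : Matrix (Fin N) (Fin n) ℝ) (W' : Matrix (Fin n) (Fin p) ℝ)
      (j : Fin p) (x : Fin N),
      Pv e (fun y => (X * W') y j) x = ∑ l, Pv e (fun y => X y l) x * W' l j := by
    intro n p X W' j x
    simp only [hPapp, Matrix.mul_apply, dotProduct]
    have rhs : ∑ l, (X x l - (∑ y, X y l * e y) * e x) * W' l j
        = (∑ l, X x l * W' l j) - ∑ l, (∑ y, X y l * e y) * e x * W' l j := by
      rw [← Finset.sum_sub_distrib]; exact Finset.sum_congr rfl fun l _ => by ring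
    have lhs2 : (∑ y, (∑ l, X y l * W' l j) * e y) * e x
        = ∑ l, (∑ y, X y l * e y) * e x * W' l j := by
      simp_rw [Finset.sum_mul]
      rw [Finset.sum_comm]
      exact Finset.sum_congr rfl fun l _ => Finset.sum_congr rfl fun y _ => by ring
    rw [rhs, lhs2]
  -- squared projected Frobenius norm of F k
  set S : ℕ → ℝ := fun k => ∑ j, ∑ x, (Pv e (fun y => F k y j) x) ^ 2 with hS
  have hSnn : ∀ k, 0 ≤ S k :=
    fun k => Finset.sum_nonneg fun j _ => Finset.sum_nonneg fun x _ => sq_nonneg _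
  have hWsq : ∀ k, ∑ l, ∑ j, W k l j ^ 2 ≤ 1 := by
    intro k
    have h1 := hW k
    simp only [frob] at h1
    have h2 : (0:ℝ) ≤ ∑ l, ∑ j, W k l j ^ 2 := by positivity
    nlinarith [Real.sq_sqrt h2, Real.sqrt_nonneg (∑ l, ∑ j, W k l j ^ 2)]
  have step : ∀ k, S (k + 1) ≤ q ^ 2 * S k := by
    intro k
    have hT : (∑ j, ∑ x, (Pv e (fun y => (F k * W k) y j) x) ^ 2)
        ≤ S k * ∑ l, ∑ j, W k l j ^ 2 := by
      simp_rw [colWkey]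
      calc ∑ j, ∑ x, (∑ l, Pv e (fun y => F k y l) x * W k l j) ^ 2
          ≤ ∑ j, ∑ x, (∑ l, (Pv e (fun y => F k y l) x) ^ 2) * (∑ l, W k l j ^ 2) :=
            Finset.sum_le_sum fun j _ => Finset.sum_le_sum fun x _ =>
              Finset.sum_mul_sq_le_sq_mul_sq _ _ _
        _ = (∑ x, ∑ l, (Pv e (fun y => F k y l) x) ^ 2) * (∑ j, ∑ l, W k l j ^ 2) := by
            rw [Finset.sum_mul_sum]
            rw [Finset.sum_comm]
        _ = S k * ∑ l, ∑ j, W k l j ^ 2 := by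
            rw [Finset.sum_comm (f := fun x l => (Pv e (fun y => F k y l) x) ^ 2),
              Finset.sum_comm (f := fun j l => W k l j ^ 2)]
    have hcolH : ∀ j : Fin (m (k + 1)),
        (fun y => (H * F k * W k) y j) = H *ᵥ (fun y => (F k * W k) y j) := by
      intro j; funext y
      rw [Matrix.mul_assoc]
      simp [Matrix.mul_apply, Matrix.mulVec, dotProduct]
    calc S (k + 1)
        = ∑ j, ∑ x, (Pv e (reluV (fun y => (H * F k * W k) y j)) x) ^ 2 := by
          simp only [hS, hF k]; rfl
      _ ≤ ∑ j, ∑ x, (Pv e (fun y => (H * F k * W k) y j) x) ^ 2 :=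
          Finset.sum_le_sum fun j _ => colRelu _
      _ ≤ ∑ j, q ^ 2 * ∑ x, (Pv e (fun y => (F k * W k) y j) x) ^ 2 := by
          refine Finset.sum_le_sum fun j _ => ?_
          rw [hcolH j]
          exact colH _
      _ = q ^ 2 * ∑ j, ∑ x, (Pv e (fun y => (F k * W k) y j) x) ^ 2 := by
          rw [Finset.mul_sum]
      _ ≤ q ^ 2 * (S k * ∑ l, ∑ j, W k l j ^ 2) := by
          exact mul_le_mul_of_nonneg_left hT (sq_nonneg q)
      _ ≤ q ^ 2 * S k := by
          have := hWsq k
          nlinarith [hSnn k, sq_nonneg q,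
            mul_nonneg (hSnn k) (sub_nonneg.mpr (hWsq k))]
  have decay : ∀ K, S K ≤ (q ^ 2) ^ K * S 0 := by
    intro K
    induction K with
    | zero => simp
    | succ K ih =>
      calc S (K + 1) ≤ q ^ 2 * S K := step K
        _ ≤ q ^ 2 * ((q ^ 2) ^ K * S 0) := mul_le_mul_of_nonneg_left ih (sq_nonneg q)
        _ = (q ^ 2) ^ (K + 1) * S 0 := by ring
  obtain ⟨B, hB⟩ := hbd
  have hVnn : (0:ℝ) ≤ ∑ x, v x ^ 2 := by positivity
  refine squeeze_zero (fun K => Finset.sum_nonneg fun j _ => abs_nonneg _)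
    (g := fun K => Real.sqrt ((∑ x, v x ^ 2) * (B * S 0)) * q ^ K) ?_ ?_
  · intro K
    have hev : e ⬝ᵥ v = 0 := by rw [dotProduct_comm]; exact hv
    have hvcol : ∀ j : Fin (m K), (fun x => F K x j) ⬝ᵥ v = (Pv e (fun x => F K x j)) ⬝ᵥ v := by
      intro j
      simp [Pv, sub_dotProduct, smul_dotProduct, hev]
    have h1 : ∀ j : Fin (m K), |(fun x => F K x j) ⬝ᵥ v|
        ≤ Real.sqrt ((∑ x, (Pv e (fun y => F K y j) x) ^ 2) * ∑ x, v x ^ 2) := by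
      intro j
      rw [hvcol j, ← Real.sqrt_sq_eq_abs]
      exact Real.sqrt_le_sqrt (Finset.sum_mul_sq_le_sq_mul_sq _ _ _)
    have h2 : ∑ j : Fin (m K), Real.sqrt ((∑ x, (Pv e (fun y => F K y j) x) ^ 2) * ∑ x, v x ^ 2)
        ≤ Real.sqrt ((m K : ℝ) * (S K * ∑ x, v x ^ 2)) := by
      have hx : 0 ≤ ∑ j : Fin (m K),
          Real.sqrt ((∑ x, (Pv e (fun y => F K y j) x) ^ 2) * ∑ x, v x ^ 2) :=
        Finset.sum_nonneg fun j _ => Real.sqrt_nonneg _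
      have hy : (0:ℝ) ≤ (m K : ℝ) * (S K * ∑ x, v x ^ 2) := by
        have := hSnn K; positivity
      rw [Real.le_sqrt hx hy]
      calc (∑ j : Fin (m K),
            Real.sqrt ((∑ x, (Pv e (fun y => F K y j) x) ^ 2) * ∑ x, v x ^ 2)) ^ 2
          = (∑ j : Fin (m K), 1 *
            Real.sqrt ((∑ x, (Pv e (fun y => F K y j) x) ^ 2) * ∑ x, v x ^ 2)) ^ 2 := by
            simp
        _ ≤ (∑ _j : Fin (m K), (1:ℝ) ^ 2) * ∑ j : Fin (m K),
            (Real.sqrt ((∑ x, (Pv e (fun y => F K y j) x) ^ 2) * ∑ x, v x ^ 2)) ^ 2 :=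
            Finset.sum_mul_sq_le_sq_mul_sq _ _ _
        _ = (m K : ℝ) * ∑ j : Fin (m K),
            (∑ x, (Pv e (fun y => F K y j) x) ^ 2) * ∑ x, v x ^ 2 := by
            congr 1
            · simp
            · refine Finset.sum_congr rfl fun j _ => ?_
              refine Real.sq_sqrt ?_
              have : (0:ℝ) ≤ ∑ x, (Pv e (fun y => F K y j) x) ^ 2 := by positivity
              positivity
        _ = (m K : ℝ) * (S K * ∑ x, v x ^ 2) := by
            rw [← Finset.sum_mul]
    have h3 : Real.sqrt ((m K : ℝ) * (S K * ∑ x, v x ^ 2))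
        ≤ Real.sqrt ((∑ x, v x ^ 2) * (B * S 0)) * q ^ K := by
      have hpow : (q ^ 2) ^ K = (q ^ K) ^ 2 := by
        rw [← pow_mul, ← pow_mul, Nat.mul_comm]
      have hmB : (m K : ℝ) ≤ B := Nat.cast_le.mpr (hB K)
      have hb1 : (m K : ℝ) * (S K * ∑ x, v x ^ 2)
          ≤ ((∑ x, v x ^ 2) * (B * S 0)) * (q ^ K) ^ 2 := by
        have hd : S K * ∑ x, v x ^ 2 ≤ ((q ^ 2) ^ K * S 0) * ∑ x, v x ^ 2 :=
          mul_le_mul_of_nonneg_right (decay K) hVnn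
        calc (m K : ℝ) * (S K * ∑ x, v x ^ 2)
            ≤ B * (((q ^ 2) ^ K * S 0) * ∑ x, v x ^ 2) := by
              refine mul_le_mul hmB hd ?_ ?_
              · have := hSnn K; positivity
              · exact le_trans (Nat.cast_nonneg _) hmB
          _ = ((∑ x, v x ^ 2) * (B * S 0)) * (q ^ K) ^ 2 := by rw [hpow]; ring
      calc Real.sqrt ((m K : ℝ) * (S K * ∑ x, v x ^ 2))
          ≤ Real.sqrt (((∑ x, v x ^ 2) * (B * S 0)) * (q ^ K) ^ 2) := Real.sqrt_le_sqrt hb1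
        _ = Real.sqrt ((∑ x, v x ^ 2) * (B * S 0)) * q ^ K := by
            rw [Real.sqrt_mul (by have := hSnn 0; positivity), Real.sqrt_sq (pow_nonneg hq0 K)]
    calc ∑ j : Fin (m K), |(fun x => F K x j) ⬝ᵥ v|
        ≤ ∑ j : Fin (m K),
          Real.sqrt ((∑ x, (Pv e (fun y => F K y j) x) ^ 2) * ∑ x, v x ^ 2) :=
          Finset.sum_le_sum fun j _ => h1 j
      _ ≤ Real.sqrt ((m K : ℝ) * (S K * ∑ x, v x ^ 2)) := h2
      _ ≤ Real.sqrt ((∑ x, v x ^ 2) * (B * S 0)) * q ^ K := h3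
  · have := (tendsto_pow_atTop_nhds_zero_of_lt_one hq0 hmu).const_mul
      (Real.sqrt ((∑ x, v x ^ 2) * (B * S 0)))
    simpa using this
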